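/- Let R be a commutative ring with an action of a finite group G by ring homomorphisms. The map 𝔮 ↦ 𝔮 ∩ R^G is an order-preserving bijection from the set of G-prime ideals of R (ordered by inclusion) onto the set of prime ideals of R^G (ordered by inclusion). -/

import Mathlib

open Pointwise

/-- A `G`-prime ideal: a proper, `G`-invariant ideal `p` such that whenever all
products `x * (g • y)` lie in `p`, either `x ∈ p` or `y ∈ p`. -/
def IsGPrime (G : Type*) {R : Type*} [Group G] [CommRing R] [MulSemiringAction G R]
    (p : Ideal R) : Prop :=
  p ≠ ⊤ ∧ (∀ (g : G) (x : R), x ∈ p → g • x ∈ p) ∧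
    ∀ x y : R, (∀ g : G, x * (g • y) ∈ p) → x ∈ p ∨ y ∈ p

/-- The subring of `G`-fixed elements of `R`. -/
def fixedSubring (G R : Type*) [Group G] [CommRing R] [MulSemiringAction G R] :
    Subring R where
  carrier := {x | ∀ g : G, g • x = x}
  mul_mem' := fun ha hb g => by rw [smul_mul', ha g, hb g]
  add_mem' := fun ha hb g => by rw [smul_add, ha g, hb g]
  one_mem' := fun g => smul_one g
  zero_mem' := fun g => smul_zero g
  neg_mem' := fun ha g => by rw [smul_neg, ha g]

section Aux

variable {G R : Type*} [Group G] [CommRing R] [MulSemiringAction G R]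

lemma fixedSubring.smul_eq (x : fixedSubring G R) (g : G) : g • (x : R) = x := x.2 g

lemma mem_fixedSubring {x : R} (h : ∀ g : G, g • x = x) : x ∈ fixedSubring G R := h

lemma mem_infOrbit_iff (Q : Ideal R) (x : R) :
    x ∈ (⨅ g : G, g • Q) ↔ ∀ g : G, g⁻¹ • x ∈ Q := by
  simp only [Submodule.mem_iInf, Ideal.mem_pointwise_smul_iff_inv_smul_mem]

lemma infOrbit_isGPrime (Q : Ideal R) (hQ : Q.IsPrime) : IsGPrime G (⨅ g : G, g • Q) := by
  refine ⟨?_, ?_, ?_⟩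
  · intro h
    have h1 : (1 : R) ∈ (⨅ g : G, g • Q) := h ▸ Submodule.mem_top
    rw [mem_infOrbit_iff] at h1
    have := h1 1
    rw [smul_one] at this
    exact hQ.ne_top (Ideal.eq_top_iff_one Q |>.mpr this)
  · intro g x hx
    rw [mem_infOrbit_iff] at hx ⊢
    intro h
    have := hx (g⁻¹ * h)
    rwa [mul_inv_rev, inv_inv, mul_smul] at this
  · intro x y hxy
    by_cases hy : y ∈ (⨅ g : G, g • Q)
    · exact Or.inr hy
    · left
      rw [mem_infOrbit_iff] at hy
      push_neg at hy
      obtain ⟨h, hh⟩ := hy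
      rw [mem_infOrbit_iff]
      intro k
      have h1 := (mem_infOrbit_iff Q _).1 (hxy (k * h⁻¹)) k
      rw [smul_mul'] at h1
      have h2 : (k⁻¹ • (k * h⁻¹) • y) = h⁻¹ • y := by
        rw [smul_smul]; congr 1; group
      rw [h2] at h1
      exact (hQ.mem_or_mem h1).resolve_right hh

lemma comap_infOrbit (Q : Ideal R) :
    Ideal.comap (fixedSubring G R).subtype (⨅ g : G, g • Q) =
      Ideal.comap (fixedSubring G R).subtype Q := by
  ext x
  simp only [Ideal.mem_comap]
  constructor
  · intro h
    have h1 := (mem_infOrbit_iff Q ((fixedSubring G R).subtype x)).1 h 1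
    rwa [inv_one, one_smul] at h1
  · intro h
    rw [mem_infOrbit_iff]
    intro g
    have hfix : g⁻¹ • ((fixedSubring G R).subtype x) = (fixedSubring G R).subtype x := x.2 g⁻¹
    rw [hfix]
    exact h

/-- Every `G`-prime ideal is the intersection of the orbit of a prime ideal. -/
lemma exists_prime_infOrbit [Finite G] {q : Ideal R} (hq : IsGPrime G q) :
    ∃ Q : Ideal R, Q.IsPrime ∧ q = ⨅ g : G, g • Q := by
  classical
  letI := Fintype.ofFinite G
  obtain ⟨hqtop, hinv, hpr⟩ := hq
  set S : Set (Ideal R) := {J | (⨅ g : G, g • J) ≤ q} with hS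
  have hqS : q ∈ S := by
    intro x hx
    rw [mem_infOrbit_iff] at hx
    have := hx 1
    rwa [inv_one, one_smul] at this
  have hchainS : ∀ c ⊆ S, IsChain (· ≤ ·) c → ∀ y ∈ c, ∃ ub ∈ S, ∀ z ∈ c, z ≤ ub := by
    intro c hcS hchain y hyc
    refine ⟨sSup c, ?_, fun z hz => le_sSup hz⟩
    intro x hx
    rw [mem_infOrbit_iff] at hx
    have hex : ∀ g : G, ∃ J, J ∈ c ∧ g⁻¹ • x ∈ J := by
      intro g
      have hmem := hx g
      rw [Submodule.mem_sSup_of_directed ⟨y, hyc⟩ hchain.directedOn] at hmem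
      obtain ⟨J, hJ, hJx⟩ := hmem
      exact ⟨J, hJ, hJx⟩
    choose J hJc hJx using hex
    have hdir : Directed (· ≤ ·) J := by
      intro a b
      rcases hchain.total (hJc a) (hJc b) with h | h
      · exact ⟨b, h, le_rfl⟩
      · exact ⟨a, le_rfl, h⟩
    obtain ⟨z, hz⟩ := hdir.finset_le Finset.univ
    have : x ∈ (⨅ g : G, g • J z) := by
      rw [mem_infOrbit_iff]
      intro g
      exact hz g (Finset.mem_univ g) (hJx g)
    exact hcS (hJc z) this
  obtain ⟨M, hqM, hMmax⟩ := zorn_le_nonempty₀ S hchainS q hqS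
  obtain ⟨hMS, hMmax'⟩ := hMmax
  have hMtop : M ≠ ⊤ := by
    intro h
    apply hqtop
    rw [Ideal.eq_top_iff_one]
    apply hMS
    rw [mem_infOrbit_iff]
    intro g
    rw [smul_one, h]
    exact Submodule.mem_top
  have hMprime : M.IsPrime := by
    refine ⟨hMtop, ?_⟩
    intro r s hrs
    by_contra hcon
    push_neg at hcon
    obtain ⟨hr, hs⟩ := hcon
    set Ma : Ideal R := M ⊔ Ideal.span {r} with hMa
    set Mb : Ideal R := M ⊔ Ideal.span {s} with hMb
    have hMaS : Ma ∉ S := by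
      intro hmem
      apply hr
      have : Ma ≤ M := hMmax' hmem le_sup_left
      exact this (Ideal.mem_sup_right (Ideal.mem_span_singleton_self r))
    have hMbS : Mb ∉ S := by
      intro hmem
      apply hs
      have : Mb ≤ M := hMmax' hmem le_sup_left
      exact this (Ideal.mem_sup_right (Ideal.mem_span_singleton_self s))
    rw [hS, Set.mem_setOf_eq, SetLike.not_le_iff_exists] at hMaS hMbS
    obtain ⟨α, hα, hαq⟩ := hMaS
    obtain ⟨β, hβ, hβq⟩ := hMbS
    have hmul : Ma * Mb ≤ M := by
      rw [Ideal.sup_mul, Ideal.mul_sup, Ideal.mul_sup,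
        Ideal.span_singleton_mul_span_singleton]
      refine sup_le (sup_le ?_ ?_) (sup_le ?_ ?_)
      · exact Ideal.mul_le_right
      · exact Ideal.mul_le_left
      · exact Ideal.mul_le_right
      · rw [Ideal.span_le, Set.singleton_subset_iff]; exact hrs
    have hprod : ∀ g : G, α * (g • β) ∈ q := by
      intro g
      apply hMS
      rw [mem_infOrbit_iff]
      intro h
      rw [smul_mul', smul_smul]
      apply hmul
      refine Ideal.mul_mem_mul ?_ ?_
      · exact (mem_infOrbit_iff Ma α).1 hα h
      · have := (mem_infOrbit_iff Mb β).1 hβ (g⁻¹ * h)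
        rwa [mul_inv_rev, inv_inv] at this
    rcases hpr α β hprod with h | h
    · exact hαq h
    · exact hβq h
  refine ⟨M, hMprime, le_antisymm ?_ hMS⟩
  intro x hx
  rw [mem_infOrbit_iff]
  intro g
  exact hqM (hinv g⁻¹ x hx)

lemma fixedSubring_isIntegral [Finite G] : Algebra.IsIntegral (fixedSubring G R) R := by
  classical
  letI := Fintype.ofFinite G
  rw [Algebra.isIntegral_def]
  intro x
  refine ⟨(prodXSubSMul G R x).toSubring (fixedSubring G R) ?_, ?_, ?_⟩
  · intro c hc
    obtain ⟨n, _, hn⟩ := Polynomial.mem_coeffs_iff.1 hc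
    intro g
    rw [hn]
    exact prodXSubSMul.coeff G R x g n
  · erw [Polynomial.monic_toSubring]
    exact prodXSubSMul.monic G R x
  · have : algebraMap (fixedSubring G R) R = (fixedSubring G R).subtype := rfl
    rw [this, Polynomial.eval₂_eq_eval_map]; erw [Polynomial.map_toSubring]
    exact prodXSubSMul.eval G R x

/-- The norm of an element: the product of its orbit. -/
lemma norm_mem_fixed [Fintype G] (x : R) :
    ∀ g : G, g • (∏ h : G, h • x) = ∏ h : G, h • x := by
  intro g
  rw [Finset.smul_prod']
  apply Fintype.prod_bijective (fun h : G => g * h)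
    (Group.mulLeft_bijective g)
  intro h
  rw [smul_smul]

end Aux

/-- `𝔮 ↦ 𝔮 ∩ Rᴳ` is an order-preserving bijection from the `G`-prime ideals of `R`
onto the prime ideals of `Rᴳ`. -/
theorem gPrime_orderIso_spec_fixed {G R : Type*} [Group G] [Finite G] [CommRing R]
    [MulSemiringAction G R] :
    (∀ q : Ideal R, IsGPrime G q → (Ideal.comap (fixedSubring G R).subtype q).IsPrime) ∧
    (∀ q q' : Ideal R, IsGPrime G q → IsGPrime G q' →
      (q ≤ q' ↔ Ideal.comap (fixedSubring G R).subtype q ≤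
        Ideal.comap (fixedSubring G R).subtype q')) ∧
    (∀ P : Ideal (fixedSubring G R), P.IsPrime →
      ∃ q : Ideal R, IsGPrime G q ∧ Ideal.comap (fixedSubring G R).subtype q = P) := by
  classical
  letI := Fintype.ofFinite G
  refine ⟨?_, ?_, ?_⟩
  · -- (1) comap of a G-prime is prime
    intro q hq
    obtain ⟨hqtop, hinv, hpr⟩ := hq
    constructor
    · intro h
      apply hqtop
      rw [Ideal.eq_top_iff_one]
      have : (1 : fixedSubring G R) ∈ Ideal.comap (fixedSubring G R).subtype q := by
        rw [h]; exact Submodule.mem_top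
      exact this
    · intro a b hab
      have hab' : (a : R) * (b : R) ∈ q := hab
      have : ∀ g : G, (a : R) * (g • (b : R)) ∈ q := by
        intro g
        rwa [fixedSubring.smul_eq b g]
      rcases hpr _ _ this with h | h
      · exact Or.inl h
      · exact Or.inr h
  · -- (2) order embedding
    intro q q' hq hq'
    constructor
    · exact fun h => Ideal.comap_mono h
    · intro hle
      obtain ⟨Q', hQ'p, rfl⟩ := exists_prime_infOrbit hq'
      haveI := hQ'p
      -- every element of q lies in some g • Q'
      have hsub : ∀ x ∈ q, ∃ g : G, x ∈ g • Q' := by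
        intro x hx
        set N := ∏ h : G, h • x with hN
        have hNq : N ∈ q := by
          rw [hN, ← Finset.mul_prod_erase Finset.univ (fun g : G => g • x)
            (Finset.mem_univ (1 : G)), one_smul]
          exact Ideal.mul_mem_right _ _ hx
        have hNfix : N ∈ fixedSubring G R := norm_mem_fixed x
        have h1 : (⟨N, hNfix⟩ : fixedSubring G R) ∈
            Ideal.comap (fixedSubring G R).subtype q := hNq
        have h2 := hle h1
        have h3 : N ∈ (⨅ g : G, g • Q') := h2
        have h4 : N ∈ Q' := by
          have := (mem_infOrbit_iff Q' N).1 h3 1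
          rwa [inv_one, one_smul] at this
        rw [hN] at h4
        obtain ⟨g, -, hg⟩ := Ideal.IsPrime.prod_mem_iff.mp h4
        refine ⟨g⁻¹, ?_⟩
        rw [Ideal.mem_pointwise_smul_iff_inv_smul_mem, inv_inv]
        exact hg
      -- prime avoidance
      have hcover : (q : Set R) ⊆ ⋃ g ∈ ((Finset.univ : Finset G) : Set G),
          ((g • Q' : Ideal R) : Set R) := by
        intro x hx
        obtain ⟨g, hg⟩ := hsub x hx
        exact Set.mem_biUnion (Finset.mem_coe.mpr (Finset.mem_univ g)) hg
      obtain ⟨g, -, hgle⟩ := (Ideal.subset_union_prime (1 : G) (1 : G)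
        (fun i _ _ _ => inferInstance)).mp hcover
      -- conclude q ≤ ⨅ h, h • Q'
      intro x hx
      rw [mem_infOrbit_iff]
      intro h
      have hx' : (g * h⁻¹) • x ∈ q := hq.2.1 _ x hx
      have := hgle hx'
      rw [Ideal.mem_pointwise_smul_iff_inv_smul_mem, smul_smul] at this
      have heq : g⁻¹ * (g * h⁻¹) = h⁻¹ := by group
      rwa [heq] at this
  · -- (3) surjectivity via lying over
    intro P hP
    haveI := hP
    haveI : Algebra.IsIntegral (fixedSubring G R) R := fixedSubring_isIntegral
    have hbot : Ideal.comap (algebraMap (fixedSubring G R) R) (⊥ : Ideal R) ≤ P := by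
      intro x hx
      have hx0 : (x : R) = 0 := hx
      have : x = 0 := Subtype.ext hx0
      rw [this]
      exact P.zero_mem
    obtain ⟨Q, -, hQp, hQc⟩ := Ideal.exists_ideal_over_prime_of_isIntegral P ⊥ hbot
    refine ⟨⨅ g : G, g • Q, infOrbit_isGPrime Q hQp, ?_⟩
    rw [comap_infOrbit]
    exact hQc
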